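/- Let Ŝ ⊆ S be a set of cluster representatives, and let Q̂_0 = ∅, Q̂_1, …, Q̂_k with k ≤ |Ŝ| be a greedy sequence for the total utility U over the ground set Ŝ (part of a greedy sequence over Ŝ that, continued for |Ŝ| steps, exhausts Ŝ). Then U(Q̂_k) ≥ (k/|Ŝ|) · U(Ŝ). -/

import Mathlib

open Finset

/-- Utility of a single trajectory with preference function `ψ` over a set of sites `Q`:
the maximum preference score over `Q`, with value `0` on the empty set. -/
noncomputable def trajU {S : Type*} (ψ : S → ℝ) (Q : Finset S) : ℝ :=
  if h : Q.Nonempty then Q.sup' h ψ else 0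

/-- Total utility: sum of the per-trajectory utilities over all trajectories. -/
noncomputable def totalU {T S : Type*} [Fintype T] (ψ : T → S → ℝ) (Q : Finset S) : ℝ :=
  ∑ j, trajU (ψ j) Q

/-- A greedy sequence of length `k` for a set function `f` over a ground set `Shat ⊆ S`:
`Q 0 = ∅` and at each step `θ` (for `1 ≤ θ ≤ k`), `Q θ` is obtained from `Q (θ-1)` by
inserting a new element `s_θ ∈ Shat \ Q (θ-1)`, chosen so that no other single insertion
of an element of `Shat` gives a larger value of `f`. -/
def IsGreedySeqOn {S : Type*} [DecidableEq S] (f : Finset S → ℝ) (Shat : Finset S)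
    (Q : ℕ → Finset S) (k : ℕ) : Prop :=
  Q 0 = ∅ ∧ ∀ θ, 1 ≤ θ → θ ≤ k →
    (∃ s ∈ Shat, s ∉ Q (θ - 1) ∧ Q θ = insert s (Q (θ - 1))) ∧
    ∀ s ∈ Shat, f (insert s (Q (θ - 1))) ≤ f (Q θ)

/-!
The total utility is submodular, being a sum of maxima, so along a greedy chain the gain of a
step can only decrease: the gain of step `i` is at most what the element chosen at step `i` would
have gained earlier, which is at most the greedy gain of that earlier step. The first `k` of a
nonincreasing list of `|Ŝ|` gains sum to at least `k/|Ŝ|` of the total, and the gains telescope to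
`U(Q̂_k)` and `U(Q̂_{|Ŝ|}) = U(Ŝ)`.
-/

/-- Submodularity, in its diminishing-returns form. -/
def HasDiminishingReturns {S : Type*} [DecidableEq S] (f : Finset S → ℝ) : Prop :=
  ∀ ⦃A B : Finset S⦄, A ⊆ B → ∀ s, f (insert s B) - f B ≤ f (insert s A) - f A

section trajU

variable {S : Type*} (ψ : S → ℝ)

lemma trajU_empty : trajU ψ ∅ = 0 := by
  simp [trajU]

variable {ψ} (hψ : ∀ s, 0 ≤ ψ s)
include hψ

lemma trajU_nonneg (Q : Finset S) : 0 ≤ trajU ψ Q := by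
  unfold trajU
  split_ifs with h
  · obtain ⟨x, hx⟩ := h
    exact (hψ x).trans (le_sup' ψ hx)
  · rfl

lemma trajU_mono {A B : Finset S} (hAB : A ⊆ B) : trajU ψ A ≤ trajU ψ B := by
  rcases A.eq_empty_or_nonempty with rfl | hA
  · exact (trajU_empty ψ).trans_le (trajU_nonneg hψ B)
  · rw [trajU, trajU, dif_pos hA, dif_pos (hA.mono hAB)]
    exact sup'_mono ψ hAB hA

lemma trajU_insert [DecidableEq S] (s : S) (Q : Finset S) :
    trajU ψ (insert s Q) = max (ψ s) (trajU ψ Q) := by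
  rcases Q.eq_empty_or_nonempty with rfl | hQ
  · simp [trajU, hψ s]
  · rw [trajU, trajU, dif_pos hQ, dif_pos (insert_nonempty s Q), sup'_insert hQ]

end trajU

lemma max_sub_le_max_sub_of_le {α : Type*} [AddCommGroup α] [LinearOrder α]
    [IsOrderedAddMonoid α] {a x y : α} (hxy : x ≤ y) : max a y - y ≤ max a x - x := by
  rw [← max_sub_sub_right, ← max_sub_sub_right, sub_self, sub_self]
  exact max_le_max (sub_le_sub_left hxy a) le_rfl

lemma totalU_empty {T S : Type*} [Fintype T] (ψ : T → S → ℝ) : totalU ψ ∅ = 0 := by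
  simp [totalU, trajU_empty]

lemma totalU_hasDiminishingReturns {T S : Type*} [Fintype T] [DecidableEq S]
    {ψ : T → S → ℝ} (hψ : ∀ j s, 0 ≤ ψ j s) : HasDiminishingReturns (totalU ψ) := by
  intro A B hAB s
  simp only [totalU, ← sum_sub_distrib]
  refine sum_le_sum fun j _ => ?_
  rw [trajU_insert (hψ j), trajU_insert (hψ j)]
  exact max_sub_le_max_sub_of_le (trajU_mono (hψ j) hAB)

namespace IsGreedySeqOn

variable {S : Type*} [DecidableEq S] {f : Finset S → ℝ} {Shat : Finset S} {Q : ℕ → Finset S}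
  {n : ℕ}

lemma step (hQ : IsGreedySeqOn f Shat Q n) {i : ℕ} (hi : i < n) :
    (∃ s ∈ Shat, s ∉ Q i ∧ Q (i + 1) = insert s (Q i)) ∧
      ∀ s ∈ Shat, f (insert s (Q i)) ≤ f (Q (i + 1)) :=
  hQ.2 (i + 1) (Nat.le_add_left 1 i) hi

lemma subset_succ (hQ : IsGreedySeqOn f Shat Q n) {i : ℕ} (hi : i < n) : Q i ⊆ Q (i + 1) := by
  obtain ⟨⟨s, -, -, hins⟩, -⟩ := hQ.step hi
  exact hins ▸ subset_insert s (Q i)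

lemma subset_of_le (hQ : IsGreedySeqOn f Shat Q n) {i j : ℕ} (hij : i ≤ j) (hjn : j ≤ n) :
    Q i ⊆ Q j := by
  induction j, hij using Nat.le_induction with
  | base => exact subset_rfl
  | succ j _ ih => exact (ih (by omega)).trans (hQ.subset_succ hjn)

lemma gain_antitoneOn (hQ : IsGreedySeqOn f Shat Q n) (hf : HasDiminishingReturns f) :
    AntitoneOn (fun i => f (Q (i + 1)) - f (Q i)) (Set.Iio n) := by
  intro i hi j hj hij
  obtain ⟨⟨s, hs, -, hins⟩, -⟩ := hQ.step hj
  have hchosen := (hQ.step hi).2 s hs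
  have hdim := hf (hQ.subset_of_le hij (le_of_lt hj)) s
  dsimp only
  rw [hins]
  linarith

lemma eq_sum_gain (hQ : IsGreedySeqOn f Shat Q n) (hf₀ : f ∅ = 0) (m : ℕ) :
    f (Q m) = ∑ i ∈ range m, (f (Q (i + 1)) - f (Q i)) := by
  rw [sum_range_sub (fun i => f (Q i)), hQ.1, hf₀, sub_zero]

end IsGreedySeqOn

lemma mul_sum_range_le_mul_sum_range_of_antitoneOn {e : ℕ → ℝ} {k n : ℕ}
    (he : AntitoneOn e (Set.Iio n)) (hkn : k ≤ n) :
    k * ∑ i ∈ range n, e i ≤ n * ∑ i ∈ range k, e i := by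
  induction n, hkn using Nat.le_induction with
  | base => rw [mul_comm]
  | succ n hkn ih =>
    have he' : AntitoneOn e (Set.Iio n) := he.mono (Set.Iio_subset_Iio (Nat.le_succ n))
    have hlast : (k : ℝ) * e n ≤ ∑ i ∈ range k, e i := by
      have hle : ∀ i ∈ range k, e n ≤ e i := fun i hi => by
        rw [mem_range] at hi
        exact he (by simp; omega) (by simp) (by omega)
      simpa [nsmul_eq_mul] using card_nsmul_le_sum (range k) e (e n) hle
    rw [sum_range_succ, Nat.cast_succ]
    nlinarith [ih he']

theorem greedy_prefix_on_reps_general {T S : Type*} [Fintype T] [DecidableEq S]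
    (ψ : T → S → ℝ) (hψ : ∀ j s, 0 ≤ ψ j s ∧ ψ j s ≤ 1)
    (Shat : Finset S) (k : ℕ) (hk : k ≤ Shat.card)
    (Q : ℕ → Finset S) (hgreedy : IsGreedySeqOn (totalU ψ) Shat Q Shat.card)
    (hQn : Q Shat.card = Shat) :
    ((k : ℝ) / (Shat.card : ℝ)) * totalU ψ Shat ≤ totalU ψ (Q k) := by
  have hgain := hgreedy.gain_antitoneOn (totalU_hasDiminishingReturns fun j s => (hψ j s).1)
  rcases Nat.eq_zero_or_pos Shat.card with hn | hn
  · simp [hn, Nat.le_zero.mp (hn ▸ hk), hgreedy.1, totalU_empty]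
  have hU : totalU ψ Shat = _ := hQn ▸ hgreedy.eq_sum_gain (totalU_empty ψ) Shat.card
  rw [div_mul_eq_mul_div, div_le_iff₀ (by exact_mod_cast hn), mul_comm _ (Shat.card : ℝ), hU,
    hgreedy.eq_sum_gain (totalU_empty ψ)]
  exact mul_sum_range_le_mul_sum_range_of_antitoneOn hgain hk

/-- if `Q` is a greedy sequence for the total utility `U` over the ground
set `Ŝ` of cluster representatives that, continued for `|Ŝ|` steps, exhausts `Ŝ`, then
its length-`k` prefix satisfies `U(Q̂_k) ≥ (k/|Ŝ|)·U(Ŝ)`. -/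
theorem greedy_prefix_on_reps {T S : Type*} [Fintype T] [Fintype S] [DecidableEq S]
    (ψ : T → S → ℝ) (hψ : ∀ j s, 0 ≤ ψ j s ∧ ψ j s ≤ 1)
    (Shat : Finset S) (k : ℕ) (hk : k ≤ Shat.card)
    (Q : ℕ → Finset S) (hgreedy : IsGreedySeqOn (totalU ψ) Shat Q Shat.card)
    (hQn : Q Shat.card = Shat) :
    ((k : ℝ) / (Shat.card : ℝ)) * totalU ψ Shat ≤ totalU ψ (Q k) :=
  greedy_prefix_on_reps_general ψ hψ Shat k hk Q hgreedy hQn
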